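/- arXiv:2207.03425 — 2 statements merged into one kernel-verified Lean document; each statement's English description precedes it below -/
import Mathlib

section
/- Let x be a real number with 1/2 < x < 1 and define p* : {k ∈ ℕ : k ≥ 5} → ℝ by p*(k) = (1 − x)²·x^{k−5}. Then p* is nonnegative, Σ_{k≥5} p*(k) = 1 − x, Σ_{k≥5} k·p*(k) = 5 − 4x, and p* maximizes the entropy under these constraints: for every function p : {k ∈ ℕ : k ≥ 5} → ℝ with p(k) ≥ 0 for all k, Σ_{k≥5} p(k) = 1 − x and Σ_{k≥5} k·p(k) = 5 − 4x (both series convergent, and Σ_{k≥5} p(k)·ln p(k) convergent), one has −Σ_{k≥5} p(k)·ln p(k) ≤ −Σ_{k≥5} p*(k)·ln p*(k), with the convention 0·ln 0 = 0. Moreover, when x = φ⁻¹ = (√5 − 1)/2, the maximizer satisfies p*(k) = φ^{1−k} for all k ≥ 5. -/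
/-!
The geometric law `q i = (1 - x)² xⁱ` (on `k = i + 5`) is an exponential family in the degree:
`log q i` is an affine function of `i + 5`. Hence `∑ p log q` depends only on the mass and the
first moment of `p`, so it equals `∑ q log q` for every admissible `p`, and Gibbs' inequality
`∑ p log q - ∑ p log p ≤ ∑ q - ∑ p = 0` (from `log t ≤ t - 1`) gives the maximality.
For `x = φ⁻¹` one has `1 - φ⁻¹ = φ⁻²`, which turns `(1 - x)² x^(k-5)` into `φ^(1-k)`.
-/

open Real

lemma mul_log_sub_mul_log_le_sub {p q : ℝ} (hp : 0 ≤ p) (hq : 0 < q) :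
    p * log q - p * log p ≤ q - p := by
  rcases hp.eq_or_lt with rfl | hp
  · simpa using hq.le
  calc p * log q - p * log p = p * log (q / p) := by rw [log_div hq.ne' hp.ne']; ring
    _ ≤ p * (q / p - 1) := mul_le_mul_of_nonneg_left (log_le_sub_one_of_pos (by positivity)) hp.le
    _ = q - p := by field_simp

theorem HasSum.mul_log_sub_mul_log_le {ι : Type*} {P q : ι → ℝ} {m n s c : ℝ}
    (hP : ∀ i, 0 ≤ P i) (hq : ∀ i, 0 < q i) (hPm : HasSum P m) (hqn : HasSum q n)
    (hPlogP : HasSum (fun i => P i * log (P i)) s) (hPlogq : HasSum (fun i => P i * log (q i)) c) :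
    c - s ≤ n - m :=
  hasSum_le (fun i => mul_log_sub_mul_log_le_sub (hP i) (hq i)) (hPlogq.sub hPlogP) (hqn.sub hPm)

theorem tsum_mul_log_le_of_log_eq_affine {ι : Type*} {P q f : ι → ℝ} {a b m μ : ℝ}
    (hP : ∀ i, 0 ≤ P i) (hq : ∀ i, 0 < q i) (hlog : ∀ i, log (q i) = a + b * f i)
    (hPm : HasSum P m) (hqm : HasSum q m)
    (hfP : HasSum (fun i => f i * P i) μ) (hfq : HasSum (fun i => f i * q i) μ)
    (hPlogP : Summable fun i => P i * log (P i)) :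
    ∑' i, q i * log (q i) ≤ ∑' i, P i * log (P i) := by
  have hcross : ∀ R : ι → ℝ, HasSum R m → HasSum (fun i => f i * R i) μ →
      HasSum (fun i => R i * log (q i)) (a * m + b * μ) := fun R hR hfR => by
    have hsplit : (fun i => R i * log (q i)) = fun i => a * R i + b * (f i * R i) :=
      funext fun i => by rw [hlog]; ring
    rw [hsplit]
    exact (hR.mul_left a).add (hfR.mul_left b)
  have hgibbs :=
    HasSum.mul_log_sub_mul_log_le hP hq hPm hqm hPlogP.hasSum (hcross P hPm hfP)
  rw [(hcross q hqm hfq).tsum_eq]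
  linarith

lemma hasSum_sq_one_sub_mul_pow {x : ℝ} (hx : ‖x‖ < 1) :
    HasSum (fun i : ℕ => (1 - x) ^ 2 * x ^ i) (1 - x) := by
  have hx1 : 1 - x ≠ 0 := sub_ne_zero.2 (lt_of_abs_lt hx).ne'
  have h := (hasSum_geometric_of_norm_lt_one hx).mul_left ((1 - x) ^ 2)
  rwa [show (1 - x) ^ 2 * (1 - x)⁻¹ = 1 - x by field_simp] at h

lemma hasSum_coe_add_mul_sq_one_sub_mul_pow {x : ℝ} (hx : ‖x‖ < 1) (n : ℕ) :
    HasSum (fun i : ℕ => ((i + n : ℕ) : ℝ) * ((1 - x) ^ 2 * x ^ i)) (n - (n - 1) * x) := by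
  have hx1 : 1 - x ≠ 0 := sub_ne_zero.2 (lt_of_abs_lt hx).ne'
  have hmoment := (hasSum_coe_mul_geometric_of_norm_lt_one hx).mul_left ((1 - x) ^ 2)
  rw [mul_div_cancel₀ _ (pow_ne_zero 2 hx1)] at hmoment
  have hsplit : (fun i : ℕ => ((i + n : ℕ) : ℝ) * ((1 - x) ^ 2 * x ^ i))
      = fun i : ℕ => (1 - x) ^ 2 * (i * x ^ i) + n * ((1 - x) ^ 2 * x ^ i) :=
    funext fun i => by push_cast; ring
  rw [hsplit, show (n : ℝ) - (n - 1) * x = x + n * (1 - x) by ring]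
  exact hmoment.add ((hasSum_sq_one_sub_mul_pow hx).mul_left (n : ℝ))

open goldenRatio in
lemma one_sub_inv_goldenRatio : 1 - φ⁻¹ = φ⁻¹ ^ 2 := by
  rw [inv_goldenRatio, neg_sq, goldenConj_sq]; ring

open goldenRatio in
lemma sq_one_sub_inv_goldenRatio_mul_inv_pow (m : ℕ) :
    (1 - φ⁻¹) ^ 2 * φ⁻¹ ^ m = φ ^ (-((m + 4 : ℕ) : ℤ)) := by
  rw [one_sub_inv_goldenRatio, zpow_neg, zpow_natCast, inv_pow, inv_pow, inv_pow, ← pow_mul,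
    ← mul_inv, ← pow_add, add_comm]

/-- for real x with 1/2 < x < 1, the distribution
p*(k) = (1−x)²·x^{k−5} on {k ≥ 5} is nonnegative, sums to 1 − x, has mean degree sum
5 − 4x, and maximizes the entropy −Σ_{k≥5} p(k)·ln p(k) among all nonnegative p with
the same two constraints (convention 0·ln 0 = 0, automatic since Real.log 0 = 0).
Moreover when x = φ⁻¹ = (√5 − 1)/2 the maximizer is p*(k) = φ^{1−k}, with
φ = (1+√5)/2 the golden ratio. -/
theorem statement18 (x : ℝ) (hx1 : 1 / 2 < x) (hx2 : x < 1) :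
    (∀ k : ℕ, 5 ≤ k → 0 ≤ (1 - x) ^ 2 * x ^ (k - 5)) ∧
    (∑' i : ℕ, (1 - x) ^ 2 * x ^ ((i + 5) - 5)) = 1 - x ∧
    (∑' i : ℕ, ((i + 5 : ℕ) : ℝ) * ((1 - x) ^ 2 * x ^ ((i + 5) - 5))) = 5 - 4 * x ∧
    (∀ p : ℕ → ℝ, (∀ k : ℕ, 5 ≤ k → 0 ≤ p k) →
      Summable (fun i : ℕ => p (i + 5)) →
      Summable (fun i : ℕ => ((i + 5 : ℕ) : ℝ) * p (i + 5)) →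
      Summable (fun i : ℕ => p (i + 5) * Real.log (p (i + 5))) →
      (∑' i : ℕ, p (i + 5)) = 1 - x →
      (∑' i : ℕ, ((i + 5 : ℕ) : ℝ) * p (i + 5)) = 5 - 4 * x →
      -(∑' i : ℕ, p (i + 5) * Real.log (p (i + 5)))
        ≤ -(∑' i : ℕ, ((1 - x) ^ 2 * x ^ ((i + 5) - 5))
              * Real.log ((1 - x) ^ 2 * x ^ ((i + 5) - 5)))) ∧
    (x = (Real.sqrt 5 - 1) / 2 → ∀ k : ℕ, 5 ≤ k →
      (1 - x) ^ 2 * x ^ (k - 5) = ((1 + Real.sqrt 5) / 2) ^ (1 - (k : ℤ))) := by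
  have hx0 : 0 < x := by linarith
  have hx : ‖x‖ < 1 := by rwa [norm_of_nonneg hx0.le]
  have hmass := hasSum_sq_one_sub_mul_pow hx
  have hmoment : HasSum (fun i : ℕ => ((i + 5 : ℕ) : ℝ) * ((1 - x) ^ 2 * x ^ i)) (5 - 4 * x) := by
    convert hasSum_coe_add_mul_sq_one_sub_mul_pow hx 5 using 1; norm_num
  simp only [Nat.add_sub_cancel]
  refine ⟨fun k _ => by positivity, hmass.tsum_eq, hmoment.tsum_eq, ?_, ?_⟩
  · intro p hp hPs hfPs hPlogP hPmass hPmoment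
    have hlog : ∀ i : ℕ, log ((1 - x) ^ 2 * x ^ i)
        = (2 * log (1 - x) - 5 * log x) + log x * ((i + 5 : ℕ) : ℝ) := fun i => by
      rw [log_mul (by positivity) (by positivity), log_pow, log_pow]; push_cast; ring
    exact neg_le_neg (tsum_mul_log_le_of_log_eq_affine (fun i => hp _ (by omega))
      (fun i => by positivity) hlog (hPmass ▸ hPs.hasSum) hmass
      (hPmoment ▸ hfPs.hasSum) hmoment hPlogP)
  · rintro rfl k hk
    have hφ : (√5 - 1) / 2 = goldenRatio⁻¹ := by rw [inv_goldenRatio]; ring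
    rw [hφ, sq_one_sub_inv_goldenRatio_mul_inv_pow]
    congr 1
    omega
end

section
/- Let n ≥ 2 be an integer and let x be a real number with 0 < x < 1/n. Set r = (1 − (n−1)x)/(1 − (n−2)x) ∈ (0,1) and define p* : {k ∈ ℕ : k ≥ n+3} → ℝ by p*(k) = (x²/(1 − (n−1)x))·r^{k−(n+2)}. Then p* is nonnegative, Σ_{k≥n+3} p*(k) = x, Σ_{k≥n+3} k·p*(k) = 1 + 4x, and p* maximizes the entropy under these constraints: for every function p : {k ∈ ℕ : k ≥ n+3} → ℝ with p(k) ≥ 0 for all k, Σ_{k≥n+3} p(k) = x and Σ_{k≥n+3} k·p(k) = 1 + 4x (both series convergent, and Σ_{k≥n+3} p(k)·ln p(k) convergent), one has −Σ_{k≥n+3} p(k)·ln p(k) ≤ −Σ_{k≥n+3} p*(k)·ln p*(k), with the convention 0·ln 0 = 0. Moreover, when x = 1/(n + φ⁻¹), the maximizer satisfies p*(k) = x·(φ⁻¹)^{k−(n+1)} for all k ≥ n+3. -/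
/-!
The maximizer is a geometric law, so `log p*(k) = A + B k` is affine in `k`. Gibbs' inequality
`p log p - p log p* ≥ p - p*`, summed over `k`, gives `Σ p log p ≥ Σ p log p* = A Σ p + B Σ k p`,
and the right-hand side only depends on the two constrained moments, which `p` and `p*` share;
hence `Σ p log p ≥ Σ p* log p*`. Writing `a = 1 - (n-1)x`, the ratio is `r = a / (a + x)`, so
`1 - r = x / (a + x)`, and the mass `x` and the mean `1 + 4x = a + (n+3)x` come out of the two
geometric series. For `x = 1/(n + g)` with `g(1 + g) = 1` one gets `a = (1 + g)x`, whence `r = g`.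
-/

open Real

lemma sub_le_mul_log_sub_mul_log {p q : ℝ} (hp : 0 ≤ p) (hq : 0 < q) :
    p - q ≤ p * log p - p * log q := by
  rcases hp.eq_or_lt with rfl | hp
  · simpa using hq.le
  · have h := mul_le_mul_of_nonneg_left (log_le_sub_one_of_pos (div_pos hq hp)) hp.le
    rw [log_div hq.ne' hp.ne', mul_sub_one, mul_div_cancel₀ _ hp.ne'] at h
    linarith

section MaxEntropy

variable {ι : Type*}

lemma tsum_mul_affine {m P : ι → ℝ} (A B : ℝ) (hP : Summable P)
    (hmP : Summable fun i => m i * P i) :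
    ∑' i, P i * (A + B * m i) = A * ∑' i, P i + B * ∑' i, m i * P i := by
  rw [← tsum_mul_left, ← tsum_mul_left, ← (hP.mul_left A).tsum_add (hmP.mul_left B)]
  exact tsum_congr fun i => by ring

theorem neg_tsum_mul_log_le_of_log_affine {p q m : ι → ℝ} {A B : ℝ}
    (hp : ∀ i, 0 ≤ p i) (hq : ∀ i, 0 < q i) (hlogq : ∀ i, log (q i) = A + B * m i)
    (hSp : Summable p) (hSmp : Summable fun i => m i * p i)
    (hSplogp : Summable fun i => p i * log (p i))
    (hSq : Summable q) (hSmq : Summable fun i => m i * q i)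
    (hmass : ∑' i, p i = ∑' i, q i) (hmean : ∑' i, m i * p i = ∑' i, m i * q i) :
    -∑' i, p i * log (p i) ≤ -∑' i, q i * log (q i) := by
  have hSplogq : Summable fun i => p i * (A + B * m i) :=
    ((hSp.mul_left A).add (hSmp.mul_left B)).congr fun i => by ring
  have hgibbs : ∑' i, (p i - q i) ≤ ∑' i, (p i * log (p i) - p i * (A + B * m i)) :=
    (hSp.sub hSq).tsum_le_tsum
      (fun i => hlogq i ▸ sub_le_mul_log_sub_mul_log (hp i) (hq i)) (hSplogp.sub hSplogq)
  rw [hSp.tsum_sub hSq, hSplogp.tsum_sub hSplogq, tsum_mul_affine A B hSp hSmp, hmass,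
    sub_self] at hgibbs
  simp_rw [hlogq]
  rw [tsum_mul_affine A B hSq hSmq, ← hmean]
  linarith

end MaxEntropy

section GeometricLaw

variable {a x : ℝ}

lemma one_sub_div_add_self (h : a + x ≠ 0) : 1 - a / (a + x) = x / (a + x) := by
  field_simp
  ring

lemma hasSum_geometric_law_mass (ha : 0 < a) (hx : 0 < x) :
    HasSum (fun i : ℕ => x ^ 2 / a * (a / (a + x)) ^ (i + 1)) x := by
  have hr1 : a / (a + x) < 1 := (div_lt_one (by positivity)).2 (by linarith)
  have h := (hasSum_geometric_of_lt_one (by positivity) hr1).mul_left (x ^ 2 / a * (a / (a + x)))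
  have hval : x ^ 2 / a * (a / (a + x)) * (x / (a + x))⁻¹ = x := by field_simp
  rw [one_sub_div_add_self (by positivity), hval] at h
  exact h.congr_fun fun i => by ring

lemma hasSum_geometric_law_moment (ha : 0 < a) (hx : 0 < x) (N : ℕ) :
    HasSum (fun i : ℕ => ((i + N : ℕ) : ℝ) * (x ^ 2 / a * (a / (a + x)) ^ (i + 1)))
      (a + N * x) := by
  set r := a / (a + x) with hr
  have hr0 : 0 ≤ r := by positivity
  have hr1 : r < 1 := (div_lt_one (by positivity)).2 (by linarith)
  have h := ((hasSum_coe_mul_geometric_of_norm_lt_one (by rwa [norm_of_nonneg hr0])).mul_left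
    (x ^ 2 / a * r)).add ((hasSum_geometric_of_lt_one hr0 hr1).mul_left (N * (x ^ 2 / a * r)))
  have hval : x ^ 2 / a * r * (r / (x / (a + x)) ^ 2) + N * (x ^ 2 / a * r) * (x / (a + x))⁻¹
      = a + N * x := by
    rw [hr]
    field_simp
  rw [one_sub_div_add_self (by positivity), hval] at h
  exact h.congr_fun fun i => by push_cast; ring

end GeometricLaw

lemma geometric_law_params_of_golden {n x g : ℝ} (hg0 : 0 < g) (hg : g * (1 + g) = 1)
    (hx0 : 0 < x) (hx : x * (n + g) = 1) :
    (1 - (n - 1) * x) / (1 - (n - 1) * x + x) = g ∧ x ^ 2 / (1 - (n - 1) * x) = x * g := by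
  have ha : 1 - (n - 1) * x = (1 + g) * x := by linear_combination -hx
  rw [ha]
  constructor
  · rw [div_eq_iff (by positivity)]
    linear_combination -x * hg
  · rw [div_eq_iff (by positivity)]
    linear_combination -x ^ 2 * hg

/-- for an integer n ≥ 2 and real x with 0 < x < 1/n, set
r = (1 − (n−1)x)/(1 − (n−2)x) ∈ (0,1). The distribution
p*(k) = (x²/(1 − (n−1)x))·r^{k−(n+2)} on {k ≥ n+3} is nonnegative, sums to x, has mean
degree sum 1 + 4x, and maximizes the entropy −Σ_{k≥n+3} p(k)·ln p(k) among all
nonnegative p with the same two constraints (convention 0·ln 0 = 0, automatic since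
Real.log 0 = 0). Moreover when x = 1/(n + φ⁻¹), with φ⁻¹ = (√5 − 1)/2 the reciprocal of
the golden ratio, the maximizer is p*(k) = x·(φ⁻¹)^{k−(n+1)}. -/
theorem statement19 (n : ℕ) (hn : 2 ≤ n) (x : ℝ) (hx0 : 0 < x) (hx1 : x < 1 / (n : ℝ)) :
    0 < (1 - ((n : ℝ) - 1) * x) / (1 - ((n : ℝ) - 2) * x) ∧
    (1 - ((n : ℝ) - 1) * x) / (1 - ((n : ℝ) - 2) * x) < 1 ∧
    (∀ k : ℕ, n + 3 ≤ k →
      0 ≤ x ^ 2 / (1 - ((n : ℝ) - 1) * x)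
            * ((1 - ((n : ℝ) - 1) * x) / (1 - ((n : ℝ) - 2) * x)) ^ (k - (n + 2))) ∧
    (∑' i : ℕ, x ^ 2 / (1 - ((n : ℝ) - 1) * x)
        * ((1 - ((n : ℝ) - 1) * x) / (1 - ((n : ℝ) - 2) * x)) ^ (i + 1)) = x ∧
    (∑' i : ℕ, ((i + (n + 3) : ℕ) : ℝ) * (x ^ 2 / (1 - ((n : ℝ) - 1) * x)
        * ((1 - ((n : ℝ) - 1) * x) / (1 - ((n : ℝ) - 2) * x)) ^ (i + 1))) = 1 + 4 * x ∧
    (∀ p : ℕ → ℝ, (∀ k : ℕ, n + 3 ≤ k → 0 ≤ p k) →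
      Summable (fun i : ℕ => p (i + (n + 3))) →
      Summable (fun i : ℕ => ((i + (n + 3) : ℕ) : ℝ) * p (i + (n + 3))) →
      Summable (fun i : ℕ => p (i + (n + 3)) * Real.log (p (i + (n + 3)))) →
      (∑' i : ℕ, p (i + (n + 3))) = x →
      (∑' i : ℕ, ((i + (n + 3) : ℕ) : ℝ) * p (i + (n + 3))) = 1 + 4 * x →
      -(∑' i : ℕ, p (i + (n + 3)) * Real.log (p (i + (n + 3))))
        ≤ -(∑' i : ℕ,
            (x ^ 2 / (1 - ((n : ℝ) - 1) * x)
              * ((1 - ((n : ℝ) - 1) * x) / (1 - ((n : ℝ) - 2) * x)) ^ (i + 1))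
            * Real.log (x ^ 2 / (1 - ((n : ℝ) - 1) * x)
              * ((1 - ((n : ℝ) - 1) * x) / (1 - ((n : ℝ) - 2) * x)) ^ (i + 1)))) ∧
    (x = 1 / ((n : ℝ) + (Real.sqrt 5 - 1) / 2) → ∀ k : ℕ, n + 3 ≤ k →
      x ^ 2 / (1 - ((n : ℝ) - 1) * x)
          * ((1 - ((n : ℝ) - 1) * x) / (1 - ((n : ℝ) - 2) * x)) ^ (k - (n + 2))
        = x * ((Real.sqrt 5 - 1) / 2) ^ (k - (n + 1))) := by
  have hn2 : (2 : ℝ) ≤ n := by exact_mod_cast hn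
  have hxn : (n : ℝ) * x < 1 := by rwa [lt_div_iff₀ (by positivity), mul_comm] at hx1
  have ha : 0 < 1 - ((n : ℝ) - 1) * x := by nlinarith
  rw [show 1 - ((n : ℝ) - 2) * x = 1 - ((n : ℝ) - 1) * x + x by ring]
  set a := 1 - ((n : ℝ) - 1) * x
  have hr0 : 0 < a / (a + x) := by positivity
  have hr1 : a / (a + x) < 1 := (div_lt_one (by positivity)).2 (by linarith)
  have hmass := hasSum_geometric_law_mass ha hx0
  have hmean := hasSum_geometric_law_moment ha hx0 (n + 3)
  rw [show a + ((n + 3 : ℕ) : ℝ) * x = 1 + 4 * x by push_cast; ring] at hmean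
  refine ⟨hr0, hr1, fun k _ => by positivity, hmass.tsum_eq, hmean.tsum_eq, ?_, ?_⟩
  · intro p hp hSp hSmp hSplogp hpmass hpmean
    refine neg_tsum_mul_log_le_of_log_affine (fun i => hp _ (Nat.le_add_left _ _))
      (fun i => by positivity) (fun i => ?_) hSp hSmp hSplogp hmass.summable hmean.summable
      (hpmass.trans hmass.tsum_eq.symm) (hpmean.trans hmean.tsum_eq.symm)
      (A := log (x ^ 2 / a) - (n + 2) * log (a / (a + x))) (B := log (a / (a + x)))
    rw [log_mul (by positivity) (by positivity), log_pow]
    push_cast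
    ring
  · intro hxg k hk
    have h5 := sq_sqrt (show (0 : ℝ) ≤ 5 by norm_num)
    have hg0 : 0 < (√5 - 1) / 2 := by nlinarith [sqrt_nonneg 5]
    obtain ⟨hr, hc⟩ := geometric_law_params_of_golden hg0 (by linear_combination h5 / 4) hx0
      (by rw [hxg, one_div, inv_mul_cancel₀ (by positivity)])
    rw [hr, hc, show k - (n + 1) = k - (n + 2) + 1 by omega, pow_succ]
    ring
end
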